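/- arXiv:1602.00343 — 2 statements merged into one kernel-verified Lean document; each statement's English description precedes it below -/
import Mathlib

section
/- (Uniform van der Corput lemma.) Let 𝓗 be a Hilbert space and let (u_n^{(t)})_{n ∈ ℕ}, t ∈ I, be a family of sequences in 𝓗 with ‖u_n^{(t)}‖ ≤ 1 for all n and t. Suppose there are nonnegative reals s_h^{(t)} such that: (i) for each h ∈ ℕ and every ε > 0 there is N₀ such that for all N ≥ N₀ and all t ∈ I, |(1/N) ∑_{n=1}^{N} ⟨u_n^{(t)}, u_{n+h}^{(t)}⟩| ≤ s_h^{(t)} + ε; and (ii) (1/H) ∑_{h=1}^{H} s_h^{(t)} → 0 as H → ∞, uniformly in t ∈ I. Then ‖(1/N) ∑_{n=1}^{N} u_n^{(t)}‖ → 0 as N → ∞, uniformly in t ∈ I. -/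
/-!
Van der Corput's trick, made quantitative so that it is uniform in `t`. Comparing
`P = ∑_{n ≤ N} u n` with the average of its shifts `∑_{n ≤ N} u (n + h)`, `h ≤ H`, costs only
`2H²`, so `H‖P‖ ≤ 2H² + ∑_{n ≤ N} ‖∑_{h ≤ H} u (n + h)‖`. Cauchy–Schwarz and expanding the
squares bound the right-hand side by the correlation sums `∑_{n ≤ N} ⟪u n, u (n + d)⟫`,
`d ≤ H`, which gives the finite inequality
`(H‖P‖)² ≤ 8H⁴ + 4NH (N + ∑_{1 ≤ d ≤ H} ‖∑_{n ≤ N} ⟪u n, u (n + d)⟫‖ + H²)`.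
Its constants do not depend on the sequence, so choosing first `H` (with `1/H` and the
averages of `s` small) and then `N` (with `H/N` small and the correlation averages close to
`s_d` for the finitely many `d ≤ H`) makes `‖P/N‖` small for all `t` at once.
-/

open Filter Finset
open scoped InnerProductSpace

theorem sum_comp_le_sum_of_injOn {α β M : Type*} [AddCommMonoid M] [PartialOrder M]
    [IsOrderedAddMonoid M] {s : Finset α} {t : Finset β} {f : α → β} {g : β → M}
    (hf : Set.InjOn f s) (hst : Set.MapsTo f s t) (hg : ∀ y ∈ t, 0 ≤ g y) :
    ∑ x ∈ s, g (f x) ≤ ∑ y ∈ t, g y := by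
  classical
  rw [← sum_image hf]
  exact sum_le_sum_of_subset_of_nonneg (image_subset_iff.2 hst) fun y hy _ ↦ hg y hy

theorem sum_Icc_comp_dist_le {g : ℕ → ℝ} (hg : ∀ d, 0 ≤ g d) {h H : ℕ} (hh : h ≤ H) :
    ∑ h' ∈ Icc 1 H, g (Nat.dist h h') ≤ 2 * ∑ d ∈ Icc 0 H, g d := by
  rw [← sum_filter_add_sum_filter_not _ (· ≤ h), two_mul]
  have hg' : ∀ d ∈ Icc 0 H, 0 ≤ g d := fun d _ ↦ hg d
  gcongr <;> refine sum_comp_le_sum_of_injOn ?_ ?_ hg' <;>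
    simp only [Set.InjOn, Set.MapsTo, coe_filter, coe_Icc, mem_Icc, Set.mem_Icc,
      Set.mem_ofPred_eq, Nat.dist] <;> omega

theorem sum_Icc_add_succ_sub_sum_Icc_add {E : Type*} [AddCommGroup E] (f : ℕ → E) (N h : ℕ) :
    ∑ n ∈ Icc 1 N, f (n + (h + 1)) - ∑ n ∈ Icc 1 N, f (n + h) = f (N + h + 1) - f (h + 1) := by
  induction N with
  | zero => simp
  | succ N ih =>
    rw [sum_Icc_succ_top (by omega), sum_Icc_succ_top (by omega), add_sub_add_comm, ih]
    abel_nf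

theorem norm_sum_Icc_add_sub_sum_Icc_le {E : Type*} [SeminormedAddCommGroup E] {f : ℕ → E}
    {M : ℝ} (hf : ∀ n, ‖f n‖ ≤ M) (N h : ℕ) :
    ‖∑ n ∈ Icc 1 N, f (n + h) - ∑ n ∈ Icc 1 N, f n‖ ≤ 2 * h * M := by
  induction h with
  | zero => simp
  | succ h ih =>
    calc ‖∑ n ∈ Icc 1 N, f (n + (h + 1)) - ∑ n ∈ Icc 1 N, f n‖
        = ‖(∑ n ∈ Icc 1 N, f (n + h) - ∑ n ∈ Icc 1 N, f n)
            + (f (N + h + 1) - f (h + 1))‖ := by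
          rw [← sum_Icc_add_succ_sub_sum_Icc_add, sub_add_sub_cancel']
      _ ≤ 2 * h * M + (M + M) := norm_add_le_of_le ih (norm_sub_le_of_le (hf _) (hf _))
      _ = 2 * ↑(h + 1) * M := by push_cast; ring

theorem mul_norm_sum_le (𝕜 : Type*) {E : Type*} [RCLike 𝕜] [SeminormedAddCommGroup E]
    [NormedSpace 𝕜 E] {u : ℕ → E} (hu : ∀ n, ‖u n‖ ≤ 1) (N H : ℕ) :
    H * ‖∑ n ∈ Icc 1 N, u n‖ ≤ 2 * H ^ 2 + ∑ n ∈ Icc 1 N, ‖∑ h ∈ Icc 1 H, u (n + h)‖ := by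
  set P := ∑ n ∈ Icc 1 N, u n
  have hdiff : ‖H • P - ∑ n ∈ Icc 1 N, ∑ h ∈ Icc 1 H, u (n + h)‖ ≤ 2 * H ^ 2 := by
    rw [sum_comm, show H • P = ∑ h ∈ Icc 1 H, P by simp, ← sum_sub_distrib]
    calc _ ≤ ∑ h ∈ Icc 1 H, (2 * H : ℝ) := by
          refine norm_sum_le_of_le _ fun h hh ↦ ?_
          rw [norm_sub_rev]
          refine (norm_sum_Icc_add_sub_sum_Icc_le hu N h).trans ?_
          have : (h : ℝ) ≤ H := by exact_mod_cast (mem_Icc.1 hh).2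
          linarith
      _ = 2 * H ^ 2 := by simp; ring
  calc H * ‖P‖ = ‖H • P‖ := by
        rw [← Nat.cast_smul_eq_nsmul 𝕜, norm_smul, RCLike.norm_natCast]
    _ ≤ ‖∑ n ∈ Icc 1 N, ∑ h ∈ Icc 1 H, u (n + h)‖ + 2 * H ^ 2 :=
        (norm_le_norm_add_norm_sub' _ _).trans (by gcongr)
    _ ≤ _ := by rw [add_comm]; gcongr; exact norm_sum_le _ _

section Correlation

variable (𝕜 : Type*) {E : Type*} [RCLike 𝕜] [SeminormedAddCommGroup E] [InnerProductSpace 𝕜 E]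

def correlationSum (u : ℕ → E) (N d : ℕ) : 𝕜 :=
  ∑ n ∈ Icc 1 N, ⟪u n, u (n + d)⟫_𝕜

variable {𝕜} {u : ℕ → E}

theorem norm_inner_le_one (hu : ∀ n, ‖u n‖ ≤ 1) (m n : ℕ) : ‖⟪u m, u n⟫_𝕜‖ ≤ 1 :=
  (norm_inner_le_norm _ _).trans (mul_le_one₀ (hu m) (norm_nonneg _) (hu n))

theorem norm_correlationSum_le (hu : ∀ n, ‖u n‖ ≤ 1) (N d : ℕ) :
    ‖correlationSum 𝕜 u N d‖ ≤ N := by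
  simpa [correlationSum] using
    norm_sum_le_of_le (Icc 1 N) fun n _ ↦ norm_inner_le_one (𝕜 := 𝕜) hu n (n + d)

theorem norm_correlationSum_shift_le (hu : ∀ n, ‖u n‖ ≤ 1) (N h d : ℕ) :
    ‖correlationSum 𝕜 (fun n ↦ u (n + h)) N d‖ ≤ ‖correlationSum 𝕜 u N d‖ + 2 * h := by
  have hshift := norm_sum_Icc_add_sub_sum_Icc_le
    (f := fun n ↦ ⟪u n, u (n + d)⟫_𝕜) (fun n ↦ norm_inner_le_one hu n (n + d)) N h
  simp only [add_right_comm _ h d, mul_one] at hshift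
  exact (norm_le_norm_add_norm_sub' _ _).trans (add_le_add_right hshift _)

theorem norm_sum_inner_shift_le (hu : ∀ n, ‖u n‖ ≤ 1) {N h h' H : ℕ} (hh : h ≤ H)
    (hh' : h' ≤ H) :
    ‖∑ n ∈ Icc 1 N, ⟪u (n + h), u (n + h')⟫_𝕜‖
      ≤ ‖correlationSum 𝕜 u N (Nat.dist h h')‖ + 2 * H := by
  wlog hle : h ≤ h' generalizing h h'
  · have hconj : ∑ n ∈ Icc 1 N, ⟪u (n + h), u (n + h')⟫_𝕜
        = starRingEnd 𝕜 (∑ n ∈ Icc 1 N, ⟪u (n + h'), u (n + h)⟫_𝕜) := by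
      simp only [map_sum, inner_conj_symm]
    rw [hconj, RCLike.norm_conj, Nat.dist_comm]
    exact this hh' hh (by omega)
  have hsum : ∑ n ∈ Icc 1 N, ⟪u (n + h), u (n + h')⟫_𝕜
      = correlationSum 𝕜 (fun n ↦ u (n + h)) N (Nat.dist h h') := by
    refine sum_congr rfl fun n _ ↦ ?_
    rw [show n + h' = n + Nat.dist h h' + h by unfold Nat.dist; omega]
  rw [hsum]
  refine (norm_correlationSum_shift_le hu N h _).trans ?_
  gcongr

theorem sum_norm_sq_sum_shift_le (N H : ℕ) :
    ∑ n ∈ Icc 1 N, ‖∑ h ∈ Icc 1 H, u (n + h)‖ ^ 2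
      ≤ ∑ h ∈ Icc 1 H, ∑ h' ∈ Icc 1 H, ‖∑ n ∈ Icc 1 N, ⟪u (n + h), u (n + h')⟫_𝕜‖ := by
  have hexpand : ∑ n ∈ Icc 1 N, ‖∑ h ∈ Icc 1 H, u (n + h)‖ ^ 2 = RCLike.re
      (∑ h ∈ Icc 1 H, ∑ h' ∈ Icc 1 H, ∑ n ∈ Icc 1 N, ⟪u (n + h), u (n + h')⟫_𝕜) := by
    simp only [← inner_self_eq_norm_sq (𝕜 := 𝕜), ← map_sum, sum_inner, inner_sum]
    rw [sum_comm]
    simp_rw [sum_comm (s := Icc 1 N)]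
    rw [sum_comm]
  rw [hexpand]
  exact (RCLike.re_le_norm _).trans <|
    (norm_sum_le _ _).trans (sum_le_sum fun h _ ↦ norm_sum_le _ _)

theorem sum_norm_sq_sum_shift_le_correlationSum (hu : ∀ n, ‖u n‖ ≤ 1) (N H : ℕ) :
    ∑ n ∈ Icc 1 N, ‖∑ h ∈ Icc 1 H, u (n + h)‖ ^ 2
      ≤ 2 * H * (N + ∑ d ∈ Icc 1 H, ‖correlationSum 𝕜 u N d‖ + H ^ 2) := by
  set c : ℕ → ℝ := fun d ↦ ‖correlationSum 𝕜 u N d‖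
  have hrow : ∀ h ∈ Icc 1 H, ∑ h' ∈ Icc 1 H, ‖∑ n ∈ Icc 1 N, ⟪u (n + h), u (n + h')⟫_𝕜‖
      ≤ 2 * (N + ∑ d ∈ Icc 1 H, c d + H ^ 2) := by
    intro h hh
    have hhH := (mem_Icc.1 hh).2
    calc _ ≤ ∑ h' ∈ Icc 1 H, (c (Nat.dist h h') + 2 * H) :=
          sum_le_sum fun h' hh' ↦ norm_sum_inner_shift_le (𝕜 := 𝕜) hu hhH (mem_Icc.1 hh').2
      _ = ∑ h' ∈ Icc 1 H, c (Nat.dist h h') + 2 * H ^ 2 := by simp [sum_add_distrib]; ring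
      _ ≤ 2 * ∑ d ∈ Icc 0 H, c d + 2 * H ^ 2 := by
          gcongr; exact sum_Icc_comp_dist_le (g := c) (fun _ ↦ norm_nonneg _) hhH
      _ = 2 * (c 0 + ∑ d ∈ Icc 1 H, c d + H ^ 2) := by
          rw [← add_sum_Ioc_eq_sum_Icc (Nat.zero_le H), ← Icc_add_one_left_eq_Ioc, zero_add]
          ring
      _ ≤ 2 * (N + ∑ d ∈ Icc 1 H, c d + H ^ 2) := by
          gcongr; exact norm_correlationSum_le hu N 0
  calc _ ≤ ∑ h ∈ Icc 1 H, ∑ h' ∈ Icc 1 H, ‖∑ n ∈ Icc 1 N, ⟪u (n + h), u (n + h')⟫_𝕜‖ :=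
        sum_norm_sq_sum_shift_le N H
    _ ≤ ∑ h ∈ Icc 1 H, 2 * (N + ∑ d ∈ Icc 1 H, c d + H ^ 2) := sum_le_sum hrow
    _ = 2 * H * (N + ∑ d ∈ Icc 1 H, c d + H ^ 2) := by simp; ring

theorem sq_mul_norm_sum_le (hu : ∀ n, ‖u n‖ ≤ 1) (N H : ℕ) :
    (H * ‖∑ n ∈ Icc 1 N, u n‖) ^ 2
      ≤ 8 * H ^ 4 + 4 * N * H * (N + ∑ d ∈ Icc 1 H, ‖correlationSum 𝕜 u N d‖ + H ^ 2) := by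
  set T := ∑ n ∈ Icc 1 N, ‖∑ h ∈ Icc 1 H, u (n + h)‖
  have hshift : H * ‖∑ n ∈ Icc 1 N, u n‖ ≤ 2 * H ^ 2 + T := mul_norm_sum_le 𝕜 hu N H
  have hcauchy : T ^ 2 ≤ N * ∑ n ∈ Icc 1 N, ‖∑ h ∈ Icc 1 H, u (n + h)‖ ^ 2 := by
    simpa using
      sq_sum_le_card_mul_sum_sq (s := Icc 1 N) (f := fun n ↦ ‖∑ h ∈ Icc 1 H, u (n + h)‖)
  have hwindow := sum_norm_sq_sum_shift_le_correlationSum (𝕜 := 𝕜) hu N H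
  calc _ ≤ (2 * H ^ 2 + T) ^ 2 := pow_le_pow_left₀ (by positivity) hshift 2
    _ ≤ 2 * (2 * H ^ 2) ^ 2 + 2 * T ^ 2 := by nlinarith [sq_nonneg (2 * (H : ℝ) ^ 2 - T)]
    _ ≤ _ := by nlinarith [mul_le_mul_of_nonneg_left hwindow (Nat.cast_nonneg (α := ℝ) N)]

theorem norm_inv_smul_sum_sq_le (hu : ∀ n, ‖u n‖ ≤ 1) {δ : ℝ} (hδ : δ ≤ 1) {N H : ℕ}
    (hH : 1 ≤ δ * H) (hN : H ≤ δ * N)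
    (hcorr : ∑ d ∈ Icc 1 H, ‖correlationSum 𝕜 u N d‖ ≤ 2 * δ * N * H) :
    ‖(N : 𝕜)⁻¹ • ∑ n ∈ Icc 1 N, u n‖ ^ 2 ≤ 24 * δ := by
  have hδ0 : 0 < δ := by nlinarith [Nat.cast_nonneg (α := ℝ) H]
  have hH0 : (0 : ℝ) < H := by nlinarith
  have hN0 : (0 : ℝ) < N := by nlinarith
  have hvdc := sq_mul_norm_sum_le (𝕜 := 𝕜) hu N H
  have hHsq : (H : ℝ) ^ 2 ≤ δ * N ^ 2 := by nlinarith
  have hbound : (H * ‖∑ n ∈ Icc 1 N, u n‖) ^ 2 ≤ H ^ 2 * (24 * δ * N ^ 2) := by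
    have h1 : (H : ℝ) ^ 4 ≤ H ^ 2 * (δ * N ^ 2) := by
      rw [show (H : ℝ) ^ 4 = H ^ 2 * H ^ 2 by ring]; gcongr
    have h2 : (N : ℝ) ^ 2 * H ≤ N ^ 2 * H * (δ * H) := le_mul_of_one_le_right (by positivity) hH
    have h3 : (N : ℝ) * H ^ 3 ≤ N * H ^ 2 * (δ * N) := by
      rw [show (N : ℝ) * H ^ 3 = N * H ^ 2 * H by ring]; gcongr
    calc _ ≤ 8 * H ^ 4 + 4 * N * H * (N + 2 * δ * N * H + H ^ 2) := hvdc.trans (by gcongr)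
      _ ≤ H ^ 2 * (24 * δ * N ^ 2) := by nlinarith
  rw [mul_pow, mul_le_mul_iff_right₀ (by positivity)] at hbound
  rw [norm_smul, norm_inv, RCLike.norm_natCast, inv_mul_eq_div, div_pow,
    div_le_iff₀ (by positivity)]
  exact hbound

end Correlation

theorem stmt5_general {𝕜 H : Type*} [RCLike 𝕜] [NormedAddCommGroup H] [InnerProductSpace 𝕜 H]
    {I : Type*}
    (u : ℕ → I → H) (hu : ∀ n t, ‖u n t‖ ≤ 1)
    (s : ℕ → I → ℝ)
    (hcorr : ∀ h : ℕ, ∀ ε : ℝ, 0 < ε → ∃ N₀ : ℕ, ∀ N : ℕ, N ≥ N₀ → ∀ t : I,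
      ‖(N : 𝕜)⁻¹ * ∑ n ∈ Finset.Icc 1 N, (⟪u n t, u (n + h) t⟫_𝕜)‖ ≤ s h t + ε)
    (havg : ∀ ε : ℝ, 0 < ε → ∃ H₀ : ℕ, ∀ Hh : ℕ, Hh ≥ H₀ → ∀ t : I,
      (Hh : ℝ)⁻¹ * ∑ h ∈ Finset.Icc 1 Hh, s h t < ε) :
    ∀ ε : ℝ, 0 < ε → ∃ N₀ : ℕ, ∀ N : ℕ, N ≥ N₀ → ∀ t : I,
      ‖(N : 𝕜)⁻¹ • ∑ n ∈ Finset.Icc 1 N, u n t‖ < ε := by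
  intro ε hε
  set δ := min 1 (ε ^ 2 / 25)
  have hδ0 : 0 < δ := by positivity
  have hδε : 24 * δ < ε ^ 2 := by have := min_le_right 1 (ε ^ 2 / 25); nlinarith
  have hδN := (tendsto_natCast_atTop_atTop (R := ℝ)).const_mul_atTop hδ0
  obtain ⟨H₀, hH₀⟩ := havg δ hδ0
  obtain ⟨K, hKH₀, hK⟩ : ∃ K : ℕ, H₀ ≤ K ∧ 1 ≤ δ * K :=
    ((eventually_ge_atTop H₀).and (hδN.eventually_ge_atTop 1)).exists
  have hK0 : (0 : ℝ) < K := by nlinarith [min_le_left 1 (ε ^ 2 / 25)]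
  obtain ⟨N₀, hN₀⟩ := eventually_atTop.1 <|
    ((eventually_all_finset (Icc 1 K)).2 fun d _ ↦ eventually_atTop.2 (hcorr d δ hδ0)).and
      (hδN.eventually_ge_atTop (K : ℝ))
  refine ⟨N₀, fun N hN t ↦ ?_⟩
  obtain ⟨hcorrN, hKN⟩ := hN₀ N hN
  have hN0 : (0 : ℝ) < N := by nlinarith
  have hsum : ∑ d ∈ Icc 1 K, ‖correlationSum 𝕜 (u · t) N d‖ ≤ 2 * δ * N * K := by
    have hs := hH₀ K hKH₀ t
    rw [inv_mul_lt_iff₀ hK0] at hs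
    calc _ ≤ ∑ d ∈ Icc 1 K, N * (s d t + δ) := sum_le_sum fun d hd ↦ by
          have := hcorrN d hd t
          rwa [norm_mul, norm_inv, RCLike.norm_natCast, inv_mul_le_iff₀ hN0] at this
      _ = N * (∑ d ∈ Icc 1 K, s d t + δ * K) := by simp [← mul_sum, sum_add_distrib, mul_comm]
      _ ≤ 2 * δ * N * K := by nlinarith
  exact lt_of_pow_lt_pow_left₀ 2 hε.le
    ((norm_inv_smul_sum_sq_le (fun n ↦ hu n t) (min_le_left _ _) hK hKN hsum).trans_lt hδε)

/-- Uniform van der Corput lemma: if the correlation averages of a uniformly bounded family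
of sequences `(u_n^{(t)})` in a Hilbert space are, uniformly in `t`, eventually bounded by
`s_h^{(t)}`, and the averages of `s_h^{(t)}` tend to `0` uniformly in `t`, then the averages
`(1/N) ∑_{n=1}^N u_n^{(t)}` tend to `0` uniformly in `t`. -/
theorem stmt5 {𝕜 H : Type*} [RCLike 𝕜] [NormedAddCommGroup H] [InnerProductSpace 𝕜 H]
    [CompleteSpace H] {I : Type*}
    (u : ℕ → I → H) (hu : ∀ n t, ‖u n t‖ ≤ 1)
    (s : ℕ → I → ℝ) (hs : ∀ h t, 0 ≤ s h t)
    (hcorr : ∀ h : ℕ, ∀ ε : ℝ, 0 < ε → ∃ N₀ : ℕ, ∀ N : ℕ, N ≥ N₀ → ∀ t : I,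
      ‖(N : 𝕜)⁻¹ * ∑ n ∈ Finset.Icc 1 N, (⟪u n t, u (n + h) t⟫_𝕜)‖ ≤ s h t + ε)
    (havg : ∀ ε : ℝ, 0 < ε → ∃ H₀ : ℕ, ∀ Hh : ℕ, Hh ≥ H₀ → ∀ t : I,
      (Hh : ℝ)⁻¹ * ∑ h ∈ Finset.Icc 1 Hh, s h t < ε) :
    ∀ ε : ℝ, 0 < ε → ∃ N₀ : ℕ, ∀ N : ℕ, N ≥ N₀ → ∀ t : I,
      ‖(N : 𝕜)⁻¹ • ∑ n ∈ Finset.Icc 1 N, u n t‖ < ε :=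
  stmt5_general u hu s hcorr havg
end

section
/- If 𝒜 ⊆ ℕ is a weakly mixing set and 𝒵 ⊆ ℕ has density 0, then 𝒜 ∖ 𝒵 is a weakly mixing set. -/
/-!
The measure `μ` that witnesses weak mixing of `A` also witnesses it for `A \ Z`. Since `Z` has
density zero, so does its thickening `{n | n + j ∈ Z for some j < k}` for every `k`, and off that
set the shifted orbits of `1_A` and `1_{A \ Z}` agree on their first `k` coordinates. By uniform
continuity on the Cantor space, the ergodic averages of any continuous `f` along the two orbits
therefore differ by `o(1)`, so `1_{A \ Z}` is generic for `μ` too, and a measure with a generic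
point is carried by that point's orbit closure. Invariance, ergodicity and weak mixing concern
`μ` alone, and removing a density-zero set does not lower the upper density.
-/

open Filter MeasureTheory Finset
open scoped Classical

/-- The shift space `Ω = {0,1}^ℕ`. -/
abbrev Omega : Type := ℕ → Bool

/-- The shift map `(Sx)(i) = x(i+1)`. -/
def shift (x : Omega) : Omega := fun i => x (i + 1)

/-- The indicator sequence `1_A ∈ Ω` of a set `A ⊆ ℕ`. -/
noncomputable def indSeq (A : Set ℕ) : Omega := fun n => decide (n ∈ A)

/-- The orbit closure `X_A` of `1_A` under the shift. -/
noncomputable def orbitClosure (A : Set ℕ) : Set Omega :=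
  closure {x : Omega | ∃ n : ℕ, x = shift^[n] (indSeq A)}

/-- `|B ∩ [1,N]|`. -/
noncomputable def natCount (B : Set ℕ) (N : ℕ) : ℕ :=
  ((Finset.Icc 1 N).filter (fun n => n ∈ B)).card

/-- `B` has density `d`: `|B ∩ [1,N]|/N → d`. -/
def HasDensity (B : Set ℕ) (d : ℝ) : Prop :=
  Tendsto (fun N : ℕ => (natCount B N : ℝ) / N) atTop (nhds d)

/-- The upper density of `B ⊆ ℕ`. -/
noncomputable def upperDensity (B : Set ℕ) : ℝ :=
  Filter.limsup (fun N : ℕ => (natCount B N : ℝ) / N) atTop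

/-- `A ⊆ ℕ` is a weakly mixing set: it has positive upper density, `1_A` is generic
for an `S`-invariant ergodic Borel probability measure `μ` supported on `X_A`,
and the resulting system is weakly mixing. -/
def WeaklyMixingSet (A : Set ℕ) : Prop :=
  0 < upperDensity A ∧
  ∃ μ : Measure Omega, IsProbabilityMeasure μ ∧ MeasurePreserving shift μ μ ∧
    μ (orbitClosure A) = 1 ∧ Ergodic shift μ ∧
    (∀ f : C(Omega, ℝ), Tendsto
      (fun N : ℕ => (N : ℝ)⁻¹ * ∑ n ∈ Finset.Icc 1 N, f (shift^[n] (indSeq A)))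
      atTop (nhds (∫ x, f x ∂μ))) ∧
    (∀ A' B' : Set Omega, MeasurableSet A' → MeasurableSet B' →
      Tendsto (fun N : ℕ => (N : ℝ)⁻¹ * ∑ n ∈ Finset.Icc 1 N,
        |(μ (A' ∩ shift^[n] ⁻¹' B')).toReal - (μ A').toReal * (μ B').toReal|)
        atTop (nhds 0))

open scoped Topology Uniformity

lemma natCount_le_self (B : Set ℕ) (N : ℕ) : natCount B N ≤ N := by
  simpa [natCount] using card_filter_le (Icc 1 N) (· ∈ B)

lemma natCount_mono {B C : Set ℕ} (h : B ⊆ C) (N : ℕ) : natCount B N ≤ natCount C N :=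
  card_le_card <| monotone_filter_right _ fun _ _ hn => h hn

lemma natCount_union_le (B C : Set ℕ) (N : ℕ) :
    natCount (B ∪ C) N ≤ natCount B N + natCount C N := by
  unfold natCount
  simpa only [Set.mem_union, filter_or] using card_union_le _ _

lemma natCount_preimage_add_le (B : Set ℕ) (j N : ℕ) :
    natCount ((· + j) ⁻¹' B) N ≤ natCount B (N + j) := by
  refine card_le_card_of_injOn (· + j) (fun n hn => ?_) (add_left_injective j).injOn
  simp only [coe_filter, mem_Icc, Set.mem_preimage, Set.mem_ofPred_eq] at hn ⊢
  exact ⟨⟨by omega, by omega⟩, hn.2⟩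

lemma natCount_div_nonneg (B : Set ℕ) (N : ℕ) : 0 ≤ (natCount B N : ℝ) / N := by
  positivity

lemma natCount_div_le_one (B : Set ℕ) (N : ℕ) : (natCount B N : ℝ) / N ≤ 1 :=
  div_le_one_of_le₀ (by exact_mod_cast natCount_le_self B N) (Nat.cast_nonneg N)

namespace HasDensity

lemma zero_mono {B C : Set ℕ} (hC : HasDensity C 0) (h : B ⊆ C) : HasDensity B 0 :=
  squeeze_zero (natCount_div_nonneg B) (fun N => div_le_div_of_nonneg_right
    (by exact_mod_cast natCount_mono h N) (Nat.cast_nonneg N)) hC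

lemma zero_union {B C : Set ℕ} (hB : HasDensity B 0) (hC : HasDensity C 0) :
    HasDensity (B ∪ C) 0 := by
  have hsum := hB.add hC
  rw [add_zero] at hsum
  refine squeeze_zero (natCount_div_nonneg _) (fun N => ?_) hsum
  rw [← add_div]
  exact div_le_div_of_nonneg_right (by exact_mod_cast natCount_union_le B C N) (Nat.cast_nonneg N)

lemma zero_preimage_add {B : Set ℕ} (hB : HasDensity B 0) (j : ℕ) :
    HasDensity ((· + j) ⁻¹' B) 0 := by
  have hshift : Tendsto (fun N : ℕ => (natCount B (N + j) : ℝ) / (N + j)) atTop (𝓝 0) := by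
    simpa [Function.comp_def] using hB.comp (tendsto_add_atTop_nat j)
  have hratio : Tendsto (fun N : ℕ => 1 + (j : ℝ) / N) atTop (𝓝 1) := by
    simpa using tendsto_const_nhds.add (tendsto_const_div_atTop_nhds_zero_nat (j : ℝ))
  have hprod := hshift.mul hratio
  rw [zero_mul] at hprod
  refine squeeze_zero' (Eventually.of_forall (natCount_div_nonneg _)) ?_ hprod
  filter_upwards [eventually_ge_atTop 1] with N hN
  have hN : (N : ℝ) ≠ 0 := by positivity
  rw [show (natCount B (N + j) : ℝ) / (N + j) * (1 + j / N) = natCount B (N + j) / N by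
    field_simp]
  exact div_le_div_of_nonneg_right (by exact_mod_cast natCount_preimage_add_le B j N)
    (Nat.cast_nonneg N)

lemma zero_thicken {Z : Set ℕ} (hZ : HasDensity Z 0) (k : ℕ) :
    HasDensity {n | ∃ j < k, n + j ∈ Z} 0 := by
  induction k with
  | zero => exact (hZ.zero_preimage_add 0).zero_mono fun n ⟨j, hj, _⟩ => absurd hj j.not_lt_zero
  | succ k ih =>
    refine (ih.zero_union (hZ.zero_preimage_add k)).zero_mono fun n ⟨j, hj, hnj⟩ => ?_
    rcases Nat.lt_succ_iff_lt_or_eq.1 hj with hj | rfl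
    exacts [Or.inl ⟨j, hj, hnj⟩, Or.inr hnj]

end HasDensity

lemma upperDensity_le_of_subset_union {A B Z : Set ℕ} (hZ : HasDensity Z 0) (h : A ⊆ B ∪ Z) :
    upperDensity A ≤ upperDensity B := by
  set v : ℕ → ℝ := fun N => (natCount B N : ℝ) / N
  set z : ℕ → ℝ := fun N => (natCount Z N : ℝ) / N
  have hle : ∀ N, (natCount A N : ℝ) / N ≤ (v + z) N := fun N => by
    simp only [Pi.add_apply, v, z, ← add_div]
    refine div_le_div_of_nonneg_right ?_ (Nat.cast_nonneg N)
    exact_mod_cast (natCount_mono h N).trans (natCount_union_le B Z N)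
  have bdd : ∀ B : Set ℕ, IsBoundedUnder (· ≤ ·) atTop fun N => (natCount B N : ℝ) / N :=
    fun B => isBoundedUnder_of ⟨1, natCount_div_le_one B⟩
  have bdd' : ∀ B : Set ℕ, IsBoundedUnder (· ≥ ·) atTop fun N => (natCount B N : ℝ) / N :=
    fun B => isBoundedUnder_of ⟨0, natCount_div_nonneg B⟩
  calc upperDensity A ≤ limsup (v + z) atTop :=
        limsup_le_limsup (Eventually.of_forall hle)
          (isCoboundedUnder_le_of_le atTop (natCount_div_nonneg A))
          (isBoundedUnder_of ⟨2, fun N => add_le_add (natCount_div_le_one B N)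
            (natCount_div_le_one Z N) |>.trans_eq one_add_one_eq_two⟩)
    _ ≤ limsup v atTop + limsup z atTop :=
        limsup_add_le (bdd' B) (bdd B) (isCoboundedUnder_le_of_le atTop (natCount_div_nonneg Z))
          (bdd Z)
    _ = upperDensity B := by rw [hZ.limsup_eq, add_zero]; rfl

lemma tendsto_average_of_forall_abs_le_off_density_zero {g : ℕ → ℝ} {M : ℝ}
    (hM : ∀ n, |g n| ≤ M) (hsmall : ∀ ε > 0, ∃ B, HasDensity B 0 ∧ ∀ n ∉ B, |g n| ≤ ε) :
    Tendsto (fun N : ℕ => (N : ℝ)⁻¹ * ∑ n ∈ Icc 1 N, g n) atTop (𝓝 0) := by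
  rw [NormedAddGroup.tendsto_nhds_zero]
  intro ε hε
  obtain ⟨B, hB, hgB⟩ := hsmall (ε / 2) (half_pos hε)
  have hMB : Tendsto (fun N : ℕ => M * ((natCount B N : ℝ) / N)) atTop (𝓝 0) := by
    simpa using hB.const_mul M
  filter_upwards [hMB.eventually_lt_const (half_pos hε), eventually_ge_atTop 1] with N hN hN1
  have hN : (0 : ℝ) < N := by exact_mod_cast hN1
  have hpoint : ∀ n, |g n| ≤ ε / 2 + if n ∈ B then M else 0 := fun n => by
    by_cases hn : n ∈ B
    · simp only [hn, if_true]; linarith [hM n]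
    · simpa [hn] using hgB n hn
  have hsum : |∑ n ∈ Icc 1 N, g n| ≤ N * (ε / 2) + M * natCount B N := by
    calc |∑ n ∈ Icc 1 N, g n| ≤ ∑ n ∈ Icc 1 N, (ε / 2 + if n ∈ B then M else 0) :=
          (abs_sum_le_sum_abs _ _).trans (sum_le_sum fun n _ => hpoint n)
      _ = N * (ε / 2) + M * natCount B N := by
          rw [sum_add_distrib, ← sum_filter, sum_const, sum_const, Nat.card_Icc]
          simp only [nsmul_eq_mul, natCount, add_tsub_cancel_right]
          ring
  calc ‖(N : ℝ)⁻¹ * ∑ n ∈ Icc 1 N, g n‖ = (N : ℝ)⁻¹ * |∑ n ∈ Icc 1 N, g n| := by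
        rw [Real.norm_eq_abs, abs_mul, abs_inv, abs_of_pos hN]
    _ ≤ (N : ℝ)⁻¹ * (N * (ε / 2) + M * natCount B N) := by gcongr
    _ = ε / 2 + M * ((natCount B N : ℝ) / N) := by field_simp
    _ < ε := by linarith

section CantorSpace

variable {α : Type*} [UniformSpace α] [DiscreteUniformity α]

lemma exists_forall_lt_eq_of_mem_uniformity {U : Set ((ℕ → α) × (ℕ → α))} (hU : U ∈ 𝓤 (ℕ → α)) :
    ∃ k, ∀ x y : ℕ → α, (∀ i < k, x i = y i) → (x, y) ∈ U := by
  have huniv : 𝓤 (ℕ → α) = ⨅ i, 𝓟 {p : (ℕ → α) × (ℕ → α) | p.1 i = p.2 i} := by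
    simp only [Pi.uniformity, DiscreteUniformity.eq_principal_setRelId, comap_principal]
    rfl
  rw [huniv] at hU
  obtain ⟨I, hI, hIU⟩ := (hasBasis_iInf_principal_finite _).mem_iff.1 hU
  obtain ⟨k, hk⟩ := hI.bddAbove
  refine ⟨k + 1, fun x y hxy => hIU ?_⟩
  simp only [Set.mem_iInter]
  exact fun i hi => hxy i (Nat.lt_succ_of_le (hk hi))

lemma exists_forall_lt_eq_abs_sub_le [CompactSpace α] (f : C(ℕ → α, ℝ)) {ε : ℝ}
    (hε : 0 < ε) : ∃ k, ∀ x y : ℕ → α, (∀ i < k, x i = y i) → |f x - f y| ≤ ε := by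
  obtain ⟨k, hk⟩ := exists_forall_lt_eq_of_mem_uniformity
    (CompactSpace.uniformContinuous_of_continuous f.continuous (Metric.dist_mem_uniformity hε))
  exact ⟨k, fun x y hxy => (hk x y hxy).le⟩

end CantorSpace

lemma shift_iterate_apply (x : Omega) (n i : ℕ) : shift^[n] x i = x (i + n) := by
  induction n generalizing i with
  | zero => rfl
  | succ n ih => rw [Function.iterate_succ_apply', shift, ih, add_right_comm, add_assoc]

lemma tendsto_average_sub_of_eqOn_compl {x y : Omega} {Z : Set ℕ} (hZ : HasDensity Z 0)
    (hxy : Set.EqOn x y Zᶜ) (f : C(Omega, ℝ)) :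
    Tendsto (fun N : ℕ => (N : ℝ)⁻¹ * ∑ n ∈ Icc 1 N, (f (shift^[n] x) - f (shift^[n] y)))
      atTop (𝓝 0) := by
  refine tendsto_average_of_forall_abs_le_off_density_zero (M := 2 * ‖f‖) (fun n => ?_)
    fun ε hε => ?_
  · have hx := f.norm_coe_le_norm (shift^[n] x)
    have hy := f.norm_coe_le_norm (shift^[n] y)
    rw [Real.norm_eq_abs] at hx hy
    linarith [abs_sub (f (shift^[n] x)) (f (shift^[n] y))]
  · obtain ⟨k, hk⟩ := exists_forall_lt_eq_abs_sub_le f hε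
    refine ⟨_, hZ.zero_thicken k, fun n hn => hk _ _ fun i hi => ?_⟩
    rw [shift_iterate_apply, shift_iterate_apply]
    exact hxy fun hZ => hn ⟨i, hi, by rwa [add_comm]⟩

def IsGenericFor {X : Type*} [TopologicalSpace X] [MeasurableSpace X] (T : X → X)
    (μ : Measure X) (x : X) : Prop :=
  ∀ f : C(X, ℝ), Tendsto (fun N : ℕ => (N : ℝ)⁻¹ * ∑ n ∈ Icc 1 N, f (T^[n] x)) atTop
    (𝓝 (∫ y, f y ∂μ))

lemma IsGenericFor.of_eqOn_compl {μ : Measure Omega} {x y : Omega} {Z : Set ℕ}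
    (hx : IsGenericFor shift μ x) (hZ : HasDensity Z 0) (hxy : Set.EqOn x y Zᶜ) :
    IsGenericFor shift μ y := fun f => by
  simpa [mul_sub, sum_sub_distrib] using
    (hx f).sub (tendsto_average_sub_of_eqOn_compl hZ hxy f)

section Support

variable {X : Type*} [TopologicalSpace X] [NormalSpace X] [MeasurableSpace X]
  [OpensMeasurableSpace X] {μ : Measure X} [IsProbabilityMeasure μ] {T : X → X} {x : X}

lemma IsGenericFor.measure_eq_zero_of_disjoint (hx : IsGenericFor T μ x) {K F : Set X}
    (hK : IsClosed K) (hxK : ∀ n, T^[n] x ∈ K) (hF : IsClosed F) (hKF : Disjoint K F) :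
    μ F = 0 := by
  obtain ⟨g, hgK, hgF, hg01⟩ := exists_continuous_zero_one_of_isClosed hK hF hKF
  have hg0 : 0 ≤ g := fun y => (hg01 y).1
  have hint : Integrable g μ := Integrable.of_bound g.continuous.aestronglyMeasurable 1
    (Eventually.of_forall fun y => by
      rw [Real.norm_eq_abs, abs_of_nonneg (hg01 y).1]; exact (hg01 y).2)
  have hzero : ∫ y, g y ∂μ = 0 := tendsto_nhds_unique (hx g) <| by
    simp [fun n => hgK (hxK n)]
  have hae : g =ᵐ[μ] 0 := (integral_eq_zero_iff_of_nonneg hg0 hint).1 hzero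
  exact measure_mono_null (fun y hy => by simp [hgF hy]) (ae_iff.1 hae)

lemma IsGenericFor.measure_closure_orbit [μ.WeaklyRegular] (hx : IsGenericFor T μ x) :
    μ (closure {y | ∃ n, y = T^[n] x}) = 1 := by
  have hK : IsClosed (closure {y | ∃ n, y = T^[n] x}) := isClosed_closure
  rw [← prob_compl_eq_zero_iff hK.measurableSet, hK.isOpen_compl.measure_eq_iSup_isClosed]
  simp only [ENNReal.iSup_eq_zero]
  exact fun F hFK hF => hx.measure_eq_zero_of_disjoint hK (fun n => subset_closure ⟨n, rfl⟩) hF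
    (Set.disjoint_of_subset_right hFK disjoint_compl_right)

end Support

/-- Removing a density-zero set from a weakly mixing set yields a weakly mixing set. -/
theorem stmt14 (A Z : Set ℕ) (hA : WeaklyMixingSet A) (hZ : HasDensity Z 0) :
    WeaklyMixingSet (A \ Z) := by
  obtain ⟨hpos, μ, hμ, hshift, -, herg, hgen, hmix⟩ := hA
  have hgen' : IsGenericFor shift μ (indSeq (A \ Z)) :=
    IsGenericFor.of_eqOn_compl hgen hZ fun m hm => by simp [indSeq, Set.notMem_of_mem_compl hm]
  have hpos' : 0 < upperDensity (A \ Z) :=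
    hpos.trans_le (upperDensity_le_of_subset_union hZ (Set.subset_sdiff_union A Z))
  exact ⟨hpos', μ, hμ, hshift, hgen'.measure_closure_orbit, herg, hgen', hmix⟩
end
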